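/- Let E be a finite-dimensional real inner product space. Let f : E → ℝ be convex and differentiable with gradient ∇f that is Lipschitz with constant L > 0, let Ψ : E → ℝ be convex, and let λ ≥ 0. Let F_λ = f + λΨ and let x* be a global minimizer of F_λ. Fix a step size η with 0 < η ≤ 1/(2L), and let (x^t)_{t≥0} be a sequence such that for every t, x^{t+1} is a global minimizer of z ↦ ηλΨ(z) + (1/2)‖z − (x^t − η∇f(x^t))‖². Then for every T ≥ 1, F_λ(x^T) − F_λ(x*) ≤ ‖x^0 − x*‖² / (2ηT). -/

import Mathlib

open Set Filter Topology AffineMap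
open scoped RealInnerProductSpace NNReal

/-! With `F = f + λΨ` and `y = x t - η ∇f (x t)`, every step satisfies, for every `u`,
`η F (x (t+1)) + ½‖u - x (t+1)‖² ≤ η F u + ½‖u - x t‖²`: add the first-order convexity of `f`
at `x t` (tested at `u`), the descent lemma for the `L`-smooth `f` (tested at `x (t+1)`, where
`ηL ≤ 1` absorbs the quadratic term) and the optimality condition of the prox subproblem
(`y - x (t+1)` is a subgradient of `ηλΨ` at `x (t+1)`). Taking `u = x t` shows that `F` decreases
along the iterates; taking `u = x*` and telescoping gives `ηT (F (x T) - F x*) ≤ ½‖x 0 - x*‖²`. -/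

theorem sub_le_div_of_proxGrad_step {X : Type*} [PseudoMetricSpace X] {F : X → ℝ} {x : ℕ → X}
    {η : ℝ} (hη : 0 < η)
    (hstep : ∀ t u, η * F (x (t + 1)) + 1 / 2 * dist u (x (t + 1)) ^ 2 ≤
      η * F u + 1 / 2 * dist u (x t) ^ 2)
    (u : X) {T : ℕ} (hT : 1 ≤ T) : F (x T) - F u ≤ dist (x 0) u ^ 2 / (2 * η * T) := by
  have hanti : Antitone (F ∘ x) := antitone_nat_of_succ_le fun t => by
    refine le_of_mul_le_mul_left (?_ : η * F (x (t + 1)) ≤ η * F (x t)) hη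
    have := hstep t (x t)
    rw [dist_self] at this
    linarith [sq_nonneg (dist (x t) (x (t + 1)))]
  have htele : ∀ n, η * ∑ t ∈ Finset.range n, (F (x (t + 1)) - F u) + 1 / 2 * dist u (x n) ^ 2 ≤
      1 / 2 * dist u (x 0) ^ 2 := by
    intro n
    induction n with
    | zero => simp
    | succ n ih =>
      rw [Finset.sum_range_succ]
      linarith [hstep n u]
  have hlast : (T : ℝ) * (F (x T) - F u) ≤ ∑ t ∈ Finset.range T, (F (x (t + 1)) - F u) := by
    simpa using Finset.card_nsmul_le_sum (Finset.range T) _ _ fun t ht =>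
      sub_le_sub_right (hanti (Finset.mem_range.mp ht : t < T)) (F u)
  have hT0 : (0 : ℝ) < T := by exact_mod_cast hT
  rw [le_div_iff₀ (by positivity), dist_comm]
  nlinarith [htele T, sq_nonneg (dist u (x T))]

section InnerProductSpace

variable {E : Type*} [NormedAddCommGroup E] [InnerProductSpace ℝ E]

theorem ConvexOn.add_inner_le_of_isMinOn_prox {h : E → ℝ} (hh : ConvexOn ℝ univ h) {y b : E}
    (hb : IsMinOn (fun z => h z + 1 / 2 * ‖z - y‖ ^ 2) univ b) (z : E) :
    h b + ⟪y - b, z - b⟫ ≤ h z := by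
  -- compare `b` with the competitor `lineMap b z θ` and let `θ → 0`
  have hθ : ∀ θ ∈ Ioc (0 : ℝ) 1, h b + ⟪y - b, z - b⟫ - h z ≤ θ * (‖z - b‖ ^ 2 / 2) := by
    rintro θ ⟨hθ0, hθ1⟩
    have hconv : h (lineMap b z θ) ≤ (1 - θ) * h b + θ * h z := by
      simpa [lineMap_apply_module] using
        hh.2 (mem_univ b) (mem_univ z) (sub_nonneg.2 hθ1) hθ0.le (sub_add_cancel 1 θ)
    have hsq : ‖lineMap b z θ - y‖ ^ 2 =
        ‖b - y‖ ^ 2 - 2 * θ * ⟪y - b, z - b⟫ + θ ^ 2 * ‖z - b‖ ^ 2 := by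
      rw [lineMap_apply_module', show θ • (z - b) + b - y = (b - y) + θ • (z - b) by abel,
        norm_add_sq_real, inner_smul_right, norm_smul, Real.norm_eq_abs, mul_pow, sq_abs,
        ← neg_sub y b, inner_neg_left]
      ring
    have hmin := isMinOn_univ_iff.mp hb (lineMap b z θ)
    simp only [hsq] at hmin
    nlinarith
  have hlim : Tendsto (fun θ : ℝ => θ * (‖z - b‖ ^ 2 / 2)) (𝓝[>] 0) (𝓝 0) :=
    ((continuous_mul_const _).tendsto' 0 0 (zero_mul _)).mono_left nhdsWithin_le_nhds
  have := ge_of_tendsto hlim (eventually_of_mem (Ioc_mem_nhdsGT zero_lt_one) hθ)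
  linarith

section Gradient

variable [CompleteSpace E] {f : E → ℝ}

theorem HasGradientAt.hasDerivAt_comp_lineMap {g a u : E} {t : ℝ}
    (h : HasGradientAt f g (lineMap a u t)) :
    HasDerivAt (f ∘ lineMap a u) ⟪g, u - a⟫ t := by
  simpa using (hasGradientAt_iff_hasFDerivAt.mp h).comp_hasDerivAt t hasDerivAt_lineMap

theorem ConvexOn.add_inner_le_of_hasGradientAt (hf : ConvexOn ℝ univ f) {g a : E}
    (hg : HasGradientAt f g a) (u : E) : f a + ⟪g, u - a⟫ ≤ f u := by
  have hφ : ConvexOn ℝ univ (f ∘ (lineMap a u : ℝ → E)) := by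
    simpa using hf.comp_affineMap (lineMap a u : ℝ →ᵃ[ℝ] E)
  have := hφ.le_slope_of_hasDerivAt (mem_univ 0) (mem_univ 1) one_pos
    (HasGradientAt.hasDerivAt_comp_lineMap (by simpa using hg))
  simp only [slope_def_field, Function.comp_apply, lineMap_apply_one, lineMap_apply_zero, sub_zero,
    div_one] at this
  linarith

theorem LipschitzWith.le_add_inner_add_sq {f' : E → E} {K : ℝ≥0} (hK : LipschitzWith K f')
    (hf : ∀ x, HasGradientAt f (f' x) x) (a u : E) :
    f u ≤ f a + ⟪f' a, u - a⟫ + K / 2 * ‖u - a‖ ^ 2 := by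
  set φ : ℝ → ℝ := fun t => f (lineMap a u t) - t * ⟪f' a, u - a⟫ - K / 2 * t ^ 2 * ‖u - a‖ ^ 2
  have hφ' : ∀ t, HasDerivAt φ
      (⟪f' (lineMap a u t) - f' a, u - a⟫ - K * t * ‖u - a‖ ^ 2) t := by
    intro t
    refine ((((hf (lineMap a u t)).hasDerivAt_comp_lineMap).sub
      ((hasDerivAt_id' t).mul_const ⟪f' a, u - a⟫)).sub
      (((hasDerivAt_pow 2 t).const_mul (K / 2 : ℝ)).mul_const (‖u - a‖ ^ 2))).congr_deriv ?_
    rw [inner_sub_left]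
    ring
  have hφ'_nonpos : ∀ t ∈ interior (Icc (0 : ℝ) 1),
      ⟪f' (lineMap a u t) - f' a, u - a⟫ - K * t * ‖u - a‖ ^ 2 ≤ 0 := by
    intro t ht
    rw [interior_Icc] at ht
    have hdist : ‖f' (lineMap a u t) - f' a‖ ≤ K * (t * ‖u - a‖) := by
      simpa [← dist_eq_norm, dist_lineMap_left, abs_of_pos ht.1, dist_comm a u]
        using hK.dist_le_mul (lineMap a u t) a
    have := real_inner_le_norm (f' (lineMap a u t) - f' a) (u - a)
    nlinarith [mul_le_mul_of_nonneg_right hdist (norm_nonneg (u - a))]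
  have hanti := antitoneOn_of_hasDerivWithinAt_nonpos (convex_Icc 0 1)
    (fun t _ => (hφ' t).continuousAt.continuousWithinAt)
    (fun t _ => (hφ' t).hasDerivWithinAt) hφ'_nonpos
  have := hanti (left_mem_Icc.2 zero_le_one) (right_mem_Icc.2 zero_le_one) zero_le_one
  simp only [φ, lineMap_apply_one, lineMap_apply_zero, one_mul, one_pow, mul_one, zero_mul,
    sub_zero, ne_eq, OfNat.ofNat_ne_zero, not_false_eq_true, zero_pow, mul_zero] at this
  linarith

theorem proxGrad_step_le {r : E → ℝ} {f' : E → E} {K : ℝ≥0} {η : ℝ}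
    (hf : ∀ x, HasGradientAt f (f' x) x) (hfconv : ConvexOn ℝ univ f) (hK : LipschitzWith K f')
    (hr : ConvexOn ℝ univ r) (hη : 0 ≤ η) (hηK : η * K ≤ 1) {a b : E}
    (hb : IsMinOn (fun z => η * r z + 1 / 2 * ‖z - (a - η • f' a)‖ ^ 2) univ b) (u : E) :
    η * (f b + r b) + 1 / 2 * ‖u - b‖ ^ 2 ≤ η * (f u + r u) + 1 / 2 * ‖u - a‖ ^ 2 := by
  have hprox := (hr.smul hη).add_inner_le_of_isMinOn_prox hb u
  have hconv := mul_le_mul_of_nonneg_left (hfconv.add_inner_le_of_hasGradientAt (hf a) u) hη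
  have hdesc := mul_le_mul_of_nonneg_left (hK.le_add_inner_add_sq hf a b) hη
  have hquad : η * (K / 2 * ‖b - a‖ ^ 2) ≤ 1 / 2 * ‖b - a‖ ^ 2 := by
    nlinarith [sq_nonneg ‖b - a‖]
  have hsplit : ‖u - a‖ ^ 2 = ‖u - b‖ ^ 2 + 2 * ⟪u - b, b - a⟫ + ‖b - a‖ ^ 2 := by
    rw [← norm_add_sq_real, sub_add_sub_cancel]
  simp only [smul_eq_mul, inner_sub_left, inner_sub_right, inner_smul_left,
    RCLike.conj_to_real, real_inner_comm] at hprox hconv hdesc hsplit ⊢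
  nlinarith

end Gradient

end InnerProductSpace

theorem prox_grad_convex_rate
    {E : Type*} [NormedAddCommGroup E] [InnerProductSpace ℝ E] [FiniteDimensional ℝ E]
    (f : E → ℝ) (f' : E → E) (hf : ∀ x, HasGradientAt f (f' x) x)
    (hfconv : ConvexOn ℝ Set.univ f)
    (L : ℝ) (hL : 0 < L) (hlip : ∀ x y, ‖f' x - f' y‖ ≤ L * ‖x - y‖)
    (Ψ : E → ℝ) (hΨconv : ConvexOn ℝ Set.univ Ψ)
    (lam : ℝ) (hlam : 0 ≤ lam)
    (xstar : E)
    (η : ℝ) (hη0 : 0 < η) (hη : η ≤ 1 / (2 * L))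
    (x : ℕ → E)
    (hprox : ∀ t : ℕ, ∀ z : E,
      η * lam * Ψ (x (t + 1)) + (1 / 2) * ‖x (t + 1) - (x t - η • f' (x t))‖ ^ 2 ≤
        η * lam * Ψ z + (1 / 2) * ‖z - (x t - η • f' (x t))‖ ^ 2) :
    ∀ T : ℕ, 1 ≤ T →
      (f (x T) + lam * Ψ (x T)) - (f xstar + lam * Ψ xstar) ≤
        ‖x 0 - xstar‖ ^ 2 / (2 * η * T) := by
  intro T hT
  have hK : LipschitzWith L.toNNReal f' :=
    LipschitzWith.of_dist_le' fun x y => by simpa only [dist_eq_norm] using hlip x y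
  have hηK : η * L.toNNReal ≤ 1 := by
    rw [Real.coe_toNNReal L hL.le]
    have := (le_div_iff₀ (by positivity)).mp hη
    linarith
  have hr : ConvexOn ℝ univ fun z => lam * Ψ z := hΨconv.smul hlam
  have hstep (t : ℕ) (u : E) := proxGrad_step_le hf hfconv hK hr hη0.le hηK
    (isMinOn_univ_iff.mpr fun z => by simpa only [mul_assoc] using hprox t z) u
  rw [← dist_eq_norm]
  exact sub_le_div_of_proxGrad_step (F := fun v => f v + lam * Ψ v) hη0
    (fun t u => by simpa only [dist_eq_norm] using hstep t u) xstar hT
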